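/- Let y_k ⇀ y weakly in W^{1,p}(Ω₃;ℝ³), p > 3, with y_k → y uniformly, det ∇y_k ⇀ det ∇y weakly in L^{p/3}(Ω₃), and suppose each y_k satisfies ∫_{Ω₃} det ∇y_k dx ≤ vol(y_k(Ω₃)). Then the limit satisfies ∫_{Ω₃} det ∇y dx ≤ vol(y(Ω₃)). -/

import Mathlib

open MeasureTheory Filter Topology

/-- The cube `Ω₃ = [-1,1]³`. -/
noncomputable def Omega3 : Set (Fin 3 → ℝ) := Set.Icc (fun _ => -1) (fun _ => 1)

/-- `G` is the (matrix-valued) weak gradient of `y` on `Ω`. -/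
def IsWeakGradOn (Ω : Set (Fin 3 → ℝ)) (y : (Fin 3 → ℝ) → Fin 3 → ℝ)
    (G : (Fin 3 → ℝ) → Matrix (Fin 3) (Fin 3) ℝ) : Prop :=
  ∀ φ : (Fin 3 → ℝ) → ℝ, ContDiff ℝ (⊤ : ℕ∞) φ → HasCompactSupport φ → tsupport φ ⊆ interior Ω →
    ∀ i j, ∫ x in Ω, φ x * G x i j = - ∫ x in Ω, fderiv ℝ φ x (Pi.single j 1) * y x i

/-- Weak convergence in `L^p(Ω)`. -/
def WeakConvLp (Ω : Set (Fin 3 → ℝ)) (p : ℝ) (f : ℕ → (Fin 3 → ℝ) → ℝ)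
    (flim : (Fin 3 → ℝ) → ℝ) : Prop :=
  ∀ g : (Fin 3 → ℝ) → ℝ, MemLp g (ENNReal.ofReal (p / (p - 1))) (volume.restrict Ω) →
    Filter.Tendsto (fun k => ∫ x in Ω, g x * f k x) Filter.atTop
      (𝓝 (∫ x in Ω, g x * flim x))

/-- Stability of the global injectivity constraint
`∫_{Ω₃} det ∇y dx ≤ vol(y(Ω₃))` under weak `W^{1,p}` convergence (`p > 3`) together with
uniform convergence `y_k → y` and weak `L^{p/3}` convergence of the determinants. -/
theorem injectivity_constraint_stable_under_weak_convergence
    (p : ℝ) (hp : 3 < p)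
    (y : ℕ → (Fin 3 → ℝ) → Fin 3 → ℝ) (ylim : (Fin 3 → ℝ) → Fin 3 → ℝ)
    (G : ℕ → (Fin 3 → ℝ) → Matrix (Fin 3) (Fin 3) ℝ)
    (Glim : (Fin 3 → ℝ) → Matrix (Fin 3) (Fin 3) ℝ)
    (hgrad : ∀ k, IsWeakGradOn Omega3 (y k) (G k))
    (hgradlim : IsWeakGradOn Omega3 ylim Glim)
    (hcont : ∀ k, ContinuousOn (y k) Omega3) (hcontlim : ContinuousOn ylim Omega3)
    (hunif : TendstoUniformlyOn y ylim atTop Omega3)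
    (hweaky : ∀ i, WeakConvLp Omega3 p (fun k x => y k x i) (fun x => ylim x i))
    (hweakG : ∀ i j, WeakConvLp Omega3 p (fun k x => G k x i j) (fun x => Glim x i j))
    (hweakdet : WeakConvLp Omega3 (p / 3) (fun k x => (G k x).det)
      (fun x => (Glim x).det))
    (hineq : ∀ k, ENNReal.ofReal (∫ x in Omega3, (G k x).det) ≤ volume (y k '' Omega3)) :
    ENNReal.ofReal (∫ x in Omega3, (Glim x).det) ≤ volume (ylim '' Omega3) := by
  have hΩc : IsCompact Omega3 := isCompact_Icc
  have hfin : IsFiniteMeasure (volume.restrict Omega3) :=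
    ⟨by rw [Measure.restrict_apply_univ]; exact hΩc.measure_lt_top⟩
  -- weak convergence of determinants against the constant 1
  have h1 : MemLp (fun _ : Fin 3 → ℝ => (1 : ℝ))
      (ENNReal.ofReal ((p / 3) / (p / 3 - 1))) (volume.restrict Omega3) :=
    memLp_const 1
  have hdet := hweakdet (fun _ => (1 : ℝ)) h1
  simp only [one_mul] at hdet
  have hdet' : Tendsto (fun k => ENNReal.ofReal (∫ x in Omega3, (G k x).det)) atTop
      (𝓝 (ENNReal.ofReal (∫ x in Omega3, (Glim x).det))) :=
    (ENNReal.continuous_ofReal.tendsto _).comp hdet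
  have hK : IsCompact (ylim '' Omega3) := hΩc.image_of_continuousOn hcontlim
  -- it suffices to bound by the measure of every cthickening
  have key : ∀ ε : ℝ, 0 < ε →
      ENNReal.ofReal (∫ x in Omega3, (Glim x).det) ≤
        volume (Metric.cthickening ε (ylim '' Omega3)) := by
    intro ε hε
    have hev : ∀ᶠ k in atTop,
        ENNReal.ofReal (∫ x in Omega3, (G k x).det) ≤
          volume (Metric.cthickening ε (ylim '' Omega3)) := by
      filter_upwards [(Metric.tendstoUniformlyOn_iff.mp hunif) ε hε] with k hk
      refine le_trans (hineq k) (measure_mono ?_)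
      rintro _ ⟨x, hx, rfl⟩
      refine Metric.thickening_subset_cthickening ε _ ?_
      rw [Metric.mem_thickening_iff]
      exact ⟨ylim x, ⟨x, hx, rfl⟩, by rw [dist_comm]; exact hk x hx⟩
    exact le_of_tendsto hdet' hev
  have hth : Tendsto (fun r => volume (Metric.cthickening r (ylim '' Omega3)))
      (𝓝[>] (0:ℝ)) (𝓝 (volume (ylim '' Omega3))) :=
    (tendsto_measure_cthickening_of_isCompact (μ := volume) hK).mono_left
      nhdsWithin_le_nhds
  refine ge_of_tendsto hth ?_
  filter_upwards [self_mem_nhdsWithin] with ε hε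
  exact key ε hε
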